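/- arXiv:2501.14882 — 2 statements merged into one kernel-verified Lean document; each statement's English description precedes it below -/
import Mathlib

section
/- Expand P_{a/b}(u,v,w) = Σ_{k≥0} T_k(u,v)·w^k in powers of w and P_{a/b}(u,v,w) = Σ_{k≥0} R_k(u,w)·v^k in powers of v. For coprime integers a, b with 1 ≤ a ≤ b and a+b ≥ 3, T_1(u,v) = (a−1)·(u+v)^{a+b−2} + (b−a)·u·(u+v)^{a+b−3}; and for coprime integers a, b with 1 ≤ a < b and b ≥ 3, R_1(u,w) = (3a−1)·u^a·(u+w)^{b−2} + (b−2a)·u^{a+1}·(u+w)^{b−3} (an identity in ℤ[u,w], where b−2a may be negative). Equivalently, A_{i,1} = (3a−1)·C(b−2, i−a) + (b−2a)·C(b−3, i−a−1), and for i+j = a+b−2, A_{i,j} = (a−1)·C(a+b−2, i) + (b−a)·C(a+b−3, i−1). -/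
open MvPolynomial

/-- Specification of the Markov numerator polynomials `P a b` (for coprime `a ≤ b`),
defined by the base cases `P 0 1 = 1`, `P 1 1 = u + v`, `P 1 2 = (u+v)^2 + u*w`
and the Farey-parent recursion
`P (a/b) = (u+v+w) * P (p1/q1) * P (p2/q2) - u^p1 * v^q1 * w^(p1+q1) * P ((p2-p1)/(q2-q1))`,
where `p1/q1` and `p2/q2` are the Farey parents of `a/b`, ordered so that `q1 < q2`.
Here the variables are `u = X 0`, `v = X 1`, `w = X 2`. -/
structure MarkovNumerator (P : ℕ → ℕ → MvPolynomial (Fin 3) ℤ) : Prop where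
  base01 : P 0 1 = 1
  base11 : P 1 1 = X 0 + X 1
  base12 : P 1 2 = (X 0 + X 1) ^ 2 + X 0 * X 2
  farey : ∀ a b p1 q1 p2 q2 : ℕ, 1 ≤ a → a < b → 3 ≤ b → Nat.Coprime a b →
    p1 + p2 = a → q1 + q2 = b → q1 < q2 →
    ((p1 : ℤ) * q2 - (p2 : ℤ) * q1 = 1 ∨ (p2 : ℤ) * q1 - (p1 : ℤ) * q2 = 1) →
    P a b = (X 0 + X 1 + X 2) * P p1 q1 * P p2 q2
      - X 0 ^ p1 * X 1 ^ q1 * X 2 ^ (p1 + q1) * P (p2 - p1) (q2 - q1)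


/-- `markovCoeff P a b i j` is the coefficient `A_{i,j}` of the monomial
`u^i * v^j * w^(a+b-1-i-j)` in the Markov numerator `P a b`. -/
noncomputable def markovCoeff (P : ℕ → ℕ → MvPolynomial (Fin 3) ℤ) (a b i j : ℕ) : ℤ :=
  MvPolynomial.coeff
    (Finsupp.single 0 i + Finsupp.single 1 j + Finsupp.single 2 (a + b - 1 - i - j)) (P a b)

/-- `zchoose n k` is the binomial coefficient `C(n,k)` for integer arguments,
equal to `0` unless `0 ≤ k ≤ n`. -/
def zchoose (n k : ℤ) : ℤ := if 0 ≤ k ∧ k ≤ n then n.toNat.choose k.toNat else 0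

section MarkovAux
open Finsupp

noncomputable def Qw (a b : ℕ) : MvPolynomial (Fin 3) ℤ :=
  (((a : ℤ) - 1 : ℤ) : MvPolynomial (Fin 3) ℤ) * (X 0 + X 1) ^ (a + b - 2)
    + (((b : ℤ) - (a : ℤ) : ℤ) : MvPolynomial (Fin 3) ℤ) * X 0 * (X 0 + X 1) ^ (a + b - 3)

noncomputable def Qv (a b : ℕ) : MvPolynomial (Fin 3) ℤ :=
  if a = 0 then 0 else if b ≤ a then 1 else
  ((3 * (a : ℤ) - 1 : ℤ) : MvPolynomial (Fin 3) ℤ) * X 0 ^ a * (X 0 + X 2) ^ (b - 2)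
    + (((b : ℤ) - 2 * (a : ℤ) : ℤ) : MvPolynomial (Fin 3) ℤ) * X 0 ^ (a + 1) * (X 0 + X 2) ^ (b - 3)

lemma Qw_mul (p q : ℕ) (hp : 1 ≤ p) (hpq : p ≤ q) :
    (X 0 + X 1) * Qw p q
      = (((p : ℤ) - 1 : ℤ) : MvPolynomial (Fin 3) ℤ) * (X 0 + X 1) ^ (p + q - 1)
        + (((q : ℤ) - (p : ℤ) : ℤ) : MvPolynomial (Fin 3) ℤ) * X 0 * (X 0 + X 1) ^ (p + q - 2) := by
  rcases le_or_gt 3 (p + q) with h | h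
  · obtain ⟨n, hn⟩ : ∃ n, p + q = n + 3 := ⟨p + q - 3, by omega⟩
    rw [Qw, hn, show n + 3 - 1 = n + 2 from rfl, show n + 3 - 2 = n + 1 from rfl,
      show n + 3 - 3 = n from rfl]
    ring
  · obtain ⟨rfl, rfl⟩ : p = 1 ∧ q = 1 := by omega
    rw [Qw]
    norm_num

lemma Qv_mul (p q : ℕ) (hp : 1 ≤ p) (hpq : p < q) :
    (X 0 + X 2) * Qv p q
      = ((3 * (p : ℤ) - 1 : ℤ) : MvPolynomial (Fin 3) ℤ) * X 0 ^ p * (X 0 + X 2) ^ (q - 1)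
        + (((q : ℤ) - 2 * (p : ℤ) : ℤ) : MvPolynomial (Fin 3) ℤ) * X 0 ^ (p + 1) * (X 0 + X 2) ^ (q - 2) := by
  rcases le_or_gt 3 q with h | h
  · obtain ⟨n, hn⟩ : ∃ n, q = n + 3 := ⟨q - 3, by omega⟩
    rw [Qv, if_neg (by omega), if_neg (by omega), hn, show n + 3 - 1 = n + 2 from rfl,
      show n + 3 - 2 = n + 1 from rfl, show n + 3 - 3 = n from rfl]
    ring
  · obtain ⟨rfl, rfl⟩ : p = 1 ∧ q = 2 := by omega
    rw [Qv, if_neg (by omega), if_neg (by omega)]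
    norm_num
    ring

lemma cop_succ (n : ℕ) : Nat.Coprime n (n+1) := by
  show Nat.gcd n (n+1) = 1
  rw [Nat.gcd_self_add_right, Nat.gcd_one_right]


lemma fs_eq02 (x y i j k : ℕ) : (single 0 x + single 2 y : Fin 3 →₀ ℕ) = single 0 i + single 1 j + single 2 k ↔ (x = i ∧ j = 0 ∧ y = k) := by
  constructor
  · intro h
    have h0 := DFunLike.congr_fun h (0 : Fin 3)
    have h1 := DFunLike.congr_fun h (1 : Fin 3)
    have h2 := DFunLike.congr_fun h (2 : Fin 3)
    simp [Finsupp.single_apply] at h0 h1 h2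
    exact ⟨h0, h1.symm, h2⟩
  · rintro ⟨rfl, rfl, rfl⟩; ext r; fin_cases r <;> simp [Finsupp.single_apply]

lemma coeff_uw (i j k A n : ℕ) :
    coeff (single 0 i + single 1 j + single 2 k) ((X 0) ^ A * (X 0 + X 2) ^ n : MvPolynomial (Fin 3) ℤ)
    = if j = 0 ∧ A ≤ i ∧ i + k = A + n then (n.choose (i - A) : ℤ) else 0 := by
  rw [add_pow, Finset.mul_sum]
  have hterm : ∀ c, (X 0) ^ A * ((X 0 : MvPolynomial (Fin 3) ℤ) ^ c * X 2 ^ (n - c) * (n.choose c : MvPolynomial (Fin 3) ℤ))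
      = monomial (single 0 (A + c) + single 2 (n - c)) ((n.choose c : ℤ)) := by
    intro c
    have h1 : (X 0:MvPolynomial (Fin 3) ℤ)^A * (X 0^c * X 2^(n-c) * (n.choose c : MvPolynomial (Fin 3) ℤ))
        = (X 0^(A+c) * X 2^(n-c)) * C ((n.choose c:ℤ)) := by
      rw [map_natCast]; ring
    rw [h1, X_pow_eq_monomial, X_pow_eq_monomial, monomial_mul, one_mul, C_apply, monomial_mul, add_zero, one_mul]
  simp only [hterm, coeff_sum, coeff_monomial]
  by_cases H : j = 0 ∧ A ≤ i ∧ i + k = A + n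
  · obtain ⟨hj, hAi, hik⟩ := H
    rw [Finset.sum_eq_single (i - A), if_pos ((fs_eq02 _ _ _ _ _).mpr ⟨by omega, by omega, by omega⟩),
      if_pos ⟨hj, hAi, hik⟩]
    · intro c _ hc
      rw [if_neg]
      rw [fs_eq02]; omega
    · intro h
      exfalso; apply h; simp only [Finset.mem_range]; omega
  · rw [if_neg H, Finset.sum_eq_zero]
    intro c hc
    simp only [Finset.mem_range] at hc
    rw [if_neg]
    rw [fs_eq02]; omega


lemma farey_parents (a b : ℕ) (ha : 1 ≤ a) (hab : a < b) (hb3 : 3 ≤ b) (hco : Nat.Coprime a b) :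
    ∃ p1 q1 p2 q2 : ℕ, ∃ e : ℤ, p1 + p2 = a ∧ q1 + q2 = b ∧ q1 < q2 ∧ (e = 1 ∨ e = -1) ∧
      (p2 : ℤ) * q1 - (p1 : ℤ) * q2 = e := by
  have hb0 : (0:ℤ) < b := by exact_mod_cast Nat.lt_of_lt_of_le (by norm_num) hb3
  -- Bezout
  have hbez : (1:ℤ) = a * Nat.gcdA a b + b * Nat.gcdB a b := by
    have := Nat.gcd_eq_gcd_ab a b
    rwa [hco.gcd_eq_one] at this
  set x := Nat.gcdA a b with hx
  set t' : ℤ := x % b with ht'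
  have ht'0 : 0 ≤ t' := Int.emod_nonneg x (by omega)
  have ht'b : t' < b := Int.emod_lt_of_pos x hb0
  have hdvd : (a:ℤ) * t' - 1 = b * (-(Nat.gcdB a b) - a * (x / b)) := by
    have hxd : t' = x - b * (x / b) := by rw [ht', Int.emod_def]
    rw [hxd]; ring_nf; linear_combination -hbez
  have ht'1 : 1 ≤ t' := by
    rcases eq_or_lt_of_le ht'0 with h | h
    · exfalso
      have : (b:ℤ) ∣ 1 := ⟨-(-(Nat.gcdB a b) - a * (x / b)), by rw [← h] at hdvd; linarith [hdvd]⟩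
      have := Int.le_of_dvd one_pos this
      omega
    · omega
  -- m'
  set m' : ℤ := -(Nat.gcdB a b) - a * (x / b) with hm'
  have hm'0 : 0 ≤ m' := by
    nlinarith [hdvd, ht'1, hb0, (by exact_mod_cast ha : (1:ℤ) ≤ a)]
  set t : ℕ := t'.toNat with htdef
  set m : ℕ := m'.toNat with hmdef
  have htc : (t:ℤ) = t' := Int.toNat_of_nonneg ht'0
  have hmc : (m:ℤ) = m' := Int.toNat_of_nonneg hm'0
  have hkey : (a:ℤ) * t = m * b + 1 := by rw [htc, hmc]; linarith [hdvd]
  have hkeyN : a * t = m * b + 1 := by exact_mod_cast hkey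
  have ht1 : 1 ≤ t := by omega
  have htb : t < b := by omega
  have hma : m < a := by
    by_contra h
    push_neg at h
    have : (a:ℤ) ≤ m := by exact_mod_cast h
    nlinarith [hkey, (by exact_mod_cast hab : (a:ℤ) < b), (by exact_mod_cast ha : (1:ℤ) ≤ a)]
  have h2t : 2 * t ≠ b := by
    intro h
    have d1 : t ∣ a * t := dvd_mul_left t a
    have d2 : t ∣ m * b := by rw [← h]; exact Dvd.dvd.mul_left (dvd_mul_left t 2) m
    have hdd := Nat.dvd_sub d1 d2
    rw [show a * t - m * b = 1 by omega] at hdd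
    have : t = 1 := Nat.dvd_one.mp hdd
    omega
  rcases Nat.lt_or_ge (2*t) b with hcase | hcase
  · refine ⟨m, t, a - m, b - t, 1, by omega, by omega, by omega, Or.inl rfl, ?_⟩
    have c1 : ((a - m : ℕ) : ℤ) = a - m := by omega
    have c2 : ((b - t : ℕ) : ℤ) = b - t := by omega
    rw [c1, c2]; linarith [hkey]
  · refine ⟨a - m, b - t, m, t, -1, by omega, by omega, by omega, Or.inr rfl, ?_⟩
    have c1 : ((a - m : ℕ) : ℤ) = a - m := by omega
    have c2 : ((b - t : ℕ) : ℤ) = b - t := by omega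
    rw [c1, c2]; linarith [hkey]


lemma farey_facts (a b p1 q1 p2 q2 : ℕ) (e : ℤ) (ha : 1 ≤ a) (hab : a < b) (hb3 : 3 ≤ b)
    (hp : p1 + p2 = a) (hq : q1 + q2 = b) (hlt : q1 < q2) (he : e = 1 ∨ e = -1)
    (hdet : (p2 : ℤ) * q1 - (p1 : ℤ) * q2 = e) :
    1 ≤ q1 ∧ p1 ≤ q1 ∧ p2 ≤ q2 ∧ 1 ≤ p2 ∧ p1 ≤ p2 ∧ p2 - p1 ≤ q2 - q1 ∧
    Nat.Coprime p1 q1 ∧ Nat.Coprime p2 q2 ∧ Nat.Coprime (p2 - p1) (q2 - q1) ∧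
    (q1 = 1 → (p1 = 0 ∧ a = 1 ∧ e = 1) ∨ (p1 = 1 ∧ b = a + 1 ∧ e = -1)) ∧
    (2 ≤ q1 → 1 ≤ p1 ∧ p1 < q1) := by
  have he' : e = 1 ∨ e = -1 := he
  have hp2z : (p2:ℤ) = a - p1 := by omega
  have hq2z : (q2:ℤ) = b - q1 := by omega
  have zE1 : (a:ℤ) * q1 - p1 * b = e := by
    rw [hp2z, hq2z] at hdet; linear_combination hdet
  have zE2 : (a:ℤ) * q2 - p2 * b = -e := by
    have hp1z : (p1:ℤ) = a - p2 := by omega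
    have hq1z : (q1:ℤ) = b - q2 := by omega
    rw [hp1z, hq1z] at hdet; linear_combination -hdet
  have az : (1:ℤ) ≤ a := by exact_mod_cast ha
  have abz : (a:ℤ) < b := by exact_mod_cast hab
  have bz : (3:ℤ) ≤ b := by exact_mod_cast hb3
  have qz : (q1:ℤ) < q2 := by exact_mod_cast hlt
  have q1nn : (0:ℤ) ≤ q1 := by positivity
  have hb0 : (0:ℤ) ≤ b := by linarith
  have heb : -1 ≤ e ∧ e ≤ 1 := by rcases he' with rfl | rfl <;> norm_num
  have p1nn : (0:ℤ) ≤ p1 := by positivity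
  have p2nn : (0:ℤ) ≤ p2 := by positivity
  have A1 : 1 ≤ q1 := by
    by_contra h
    have hq10 : (q1:ℤ) = 0 := by omega
    rw [hq10] at zE1
    rcases Nat.eq_zero_or_pos p1 with h0 | h0
    · have : (p1:ℤ) = 0 := by exact_mod_cast h0
      rw [this] at zE1; simp at zE1; omega
    · have h1 : (1:ℤ) ≤ p1 := by exact_mod_cast h0
      have h2 := mul_le_mul_of_nonneg_right h1 hb0
      simp at zE1
      linarith [heb.1, heb.2]
  have q1z1 : (1:ℤ) ≤ q1 := by exact_mod_cast A1
  have q2z2 : (2:ℤ) ≤ q2 := by omega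
  have A4 : p1 ≤ q1 := by
    by_contra h
    have h1 : (q1:ℤ) + 1 ≤ p1 := by omega
    have h2 := mul_le_mul_of_nonneg_right h1 hb0
    have h3 := mul_le_mul_of_nonneg_right (show (a:ℤ) ≤ b - 1 by linarith) q1nn
    linarith [zE1, heb.1, heb.2]
  have A5 : p2 ≤ q2 := by
    by_contra h
    have h1 : (q2:ℤ) + 1 ≤ p2 := by omega
    have h2 := mul_le_mul_of_nonneg_right h1 hb0
    have h3 := mul_le_mul_of_nonneg_right (show (a:ℤ) ≤ b - 1 by linarith) (show (0:ℤ) ≤ q2 by linarith)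
    linarith [zE2, heb.1, heb.2]
  have A6 : 1 ≤ p2 := by
    by_contra h
    have : (p2:ℤ) = 0 := by omega
    rw [this] at zE2
    have h1 : (1:ℤ)*2 ≤ (a:ℤ)*q2 := mul_le_mul az q2z2 (by norm_num) (by linarith)
    simp at zE2
    linarith [heb.1, heb.2]
  have A7 : p1 ≤ p2 := by
    by_contra h
    have h1 : (p2:ℤ) + 1 ≤ p1 := by omega
    have h2 := mul_le_mul_of_nonneg_right h1 hb0
    have h3 := mul_le_mul_of_nonneg_left (show (q1:ℤ) - q2 ≤ -1 by linarith) (show (0:ℤ) ≤ a by linarith)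
    linarith [zE1, zE2, heb.1, heb.2]
  have A8 : p2 - p1 ≤ q2 - q1 := by
    by_contra h
    have h1 : (q2:ℤ) - q1 + 1 ≤ p2 - p1 := by omega
    have h2 := mul_le_mul_of_nonneg_right h1 hb0
    have h3 := mul_le_mul_of_nonneg_right (show (a:ℤ) ≤ b - 1 by linarith) (show (0:ℤ) ≤ (q2:ℤ) - q1 by linarith)
    linarith [zE1, zE2, heb.1, heb.2]
  have cop : ∀ x y : ℕ, ((Nat.gcd x y : ℤ) ∣ e) → Nat.Coprime x y := by
    intro x y hd
    have h1 : (Nat.gcd x y : ℤ) ∣ 1 := by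
      rcases he' with rfl | rfl
      · exact hd
      · exact dvd_neg.mp hd
    have h2 : Nat.gcd x y ∣ 1 := by exact_mod_cast h1
    exact Nat.dvd_one.mp h2
  have C1 : Nat.Coprime p1 q1 := by
    apply cop
    rw [← zE1]
    exact dvd_sub ((Int.natCast_dvd_natCast.mpr (Nat.gcd_dvd_right p1 q1)).mul_left a)
      ((Int.natCast_dvd_natCast.mpr (Nat.gcd_dvd_left p1 q1)).mul_right b)
  have C2 : Nat.Coprime p2 q2 := by
    have : (Nat.gcd p2 q2 : ℤ) ∣ -e := by
      rw [← zE2]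
      exact dvd_sub ((Int.natCast_dvd_natCast.mpr (Nat.gcd_dvd_right p2 q2)).mul_left a)
        ((Int.natCast_dvd_natCast.mpr (Nat.gcd_dvd_left p2 q2)).mul_right b)
    exact cop _ _ (dvd_neg.mp this)
  have c3p : ((p2 - p1 : ℕ) : ℤ) = (p2:ℤ) - p1 := by omega
  have c3q : ((q2 - q1 : ℕ) : ℤ) = (q2:ℤ) - q1 := by omega
  have det3 : ((p2 - p1 : ℕ) : ℤ) * q1 - (p1:ℤ) * ((q2 - q1 : ℕ) : ℤ) = e := by
    rw [c3p, c3q]; linear_combination hdet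
  have C3 : Nat.Coprime (p2 - p1) (q2 - q1) := by
    apply cop
    rw [← det3]
    exact dvd_sub ((Int.natCast_dvd_natCast.mpr (Nat.gcd_dvd_left _ _)).mul_right q1)
      ((Int.natCast_dvd_natCast.mpr (Nat.gcd_dvd_right _ _)).mul_left p1)
  have A12 : q1 = 1 → (p1 = 0 ∧ a = 1 ∧ e = 1) ∨ (p1 = 1 ∧ b = a + 1 ∧ e = -1) := by
    intro h
    have hq11 : (q1:ℤ) = 1 := by exact_mod_cast h
    rw [hq11, mul_one] at zE1
    rcases he' with rfl | rfl
    · left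
      have hp10 : p1 = 0 := by
        by_contra hc
        have : (1:ℤ) ≤ p1 := by
          have : 1 ≤ p1 := Nat.one_le_iff_ne_zero.mpr hc
          exact_mod_cast this
        have h2 := mul_le_mul_of_nonneg_right this hb0
        linarith [zE1]
      refine ⟨hp10, ?_, rfl⟩
      have : (p1:ℤ) = 0 := by exact_mod_cast hp10
      rw [this] at zE1
      have : (a:ℤ) = 1 := by linarith
      exact_mod_cast this
    · right
      have hp11 : p1 = 1 := by
        rcases Nat.lt_or_ge p1 2 with hc | hc
        · interval_cases p1
          · exfalso
            simp only [Nat.cast_zero, zero_mul, sub_zero, Nat.cast_ofNat] at zE1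
            omega
          · rfl
        · exfalso
          have h2 : (2:ℤ) ≤ p1 := by exact_mod_cast hc
          have h3 := mul_le_mul_of_nonneg_right h2 hb0
          linarith [zE1]
      refine ⟨hp11, ?_, rfl⟩
      have : (p1:ℤ) = 1 := by exact_mod_cast hp11
      rw [this] at zE1
      have : (b:ℤ) = a + 1 := by linarith
      exact_mod_cast this
  have A13 : 2 ≤ q1 → 1 ≤ p1 ∧ p1 < q1 := by
    intro h
    have hq1z2 : (2:ℤ) ≤ q1 := by exact_mod_cast h
    have hp1pos : 1 ≤ p1 := by
      by_contra hc
      have : (p1:ℤ) = 0 := by omega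
      rw [this] at zE1
      have h1 : (1:ℤ)*2 ≤ (a:ℤ)*q1 := mul_le_mul az hq1z2 (by norm_num) (by linarith)
      simp at zE1
      linarith [heb.1, heb.2]
    refine ⟨hp1pos, ?_⟩
    rcases Nat.lt_or_ge p1 q1 with h1 | h1
    · exact h1
    · exfalso
      have : p1 = q1 := le_antisymm A4 h1
      rw [this] at C1
      have hq11 : q1 = 1 := by rw [← Nat.gcd_self q1]; exact C1
      omega
  exact ⟨A1, A4, A5, A6, A7, A8, C1, C2, C3, A12, A13⟩


lemma markov_main (P : ℕ → ℕ → MvPolynomial (Fin 3) ℤ) (hP : MarkovNumerator P) :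
    ∀ b a : ℕ, 1 ≤ a → a ≤ b → Nat.Coprime a b →
      (∃ g, P a b = (X 0 + X 1) ^ (a + b - 1) + X 2 * Qw a b + X 2 ^ 2 * g) ∧
      (∃ g, P a b = X 0 ^ a * (X 0 + X 2) ^ (b - 1) + X 1 * Qv a b + X 1 ^ 2 * g) := by
  intro b
  induction b using Nat.strong_induction_on with
  | _ b IH =>
  intro a ha hab hco
  rcases Nat.lt_or_ge b 3 with hb | hb3
  · -- base cases b = 1, 2
    have hb1 : b = 1 ∨ b = 2 := by omega
    rcases hb1 with rfl | rfl
    · obtain rfl : a = 1 := by omega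
      constructor
      · exact ⟨0, by rw [hP.base11, Qw]; push_cast; norm_num⟩
      · exact ⟨0, by rw [hP.base11, Qv, if_neg (by omega), if_pos (by omega)]; norm_num⟩
    · obtain rfl : a = 1 := by
        interval_cases a
        · rfl
        · exfalso
          have : Nat.gcd 2 2 = 1 := hco
          simp [Nat.gcd_self] at this
      constructor
      · exact ⟨0, by rw [hP.base12, Qw]; push_cast; norm_num; ring⟩
      · exact ⟨1, by rw [hP.base12, Qv, if_neg (by omega), if_neg (by omega)]; push_cast; norm_num; ring⟩
  · -- main case
    have hab' : a < b := by
      rcases Nat.lt_or_ge a b with h | h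
      · exact h
      · exfalso
        have hev : a = b := le_antisymm hab h
        subst hev
        have : a = 1 := by rw [← Nat.gcd_self a]; exact hco
        omega
    obtain ⟨p1, q1, p2, q2, e, hp, hq, hlt, he, hdet⟩ := farey_parents a b ha hab' hb3 hco
    obtain ⟨B1, B4, B5, B6, B7, B8, C1, C2, C3, B12, B13⟩ :=
      farey_facts a b p1 q1 p2 q2 e ha hab' hb3 hp hq hlt he hdet
    have hdisj : (p1:ℤ)*q2 - p2*q1 = 1 ∨ (p2:ℤ)*q1 - p1*q2 = 1 := by
      rcases he with rfl | rfl
      · right; exact hdet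
      · left; linarith [hdet]
    have hrec := hP.farey a b p1 q1 p2 q2 ha hab' hb3 hco hp hq hlt hdisj
    have hq2b : q2 < b := by omega
    have hq1b : q1 < b := by omega
    have hSw : ∀ p q : ℕ, q < b → 1 ≤ q → p ≤ q → Nat.Coprime p q →
        ∃ g, P p q = (X 0 + X 1) ^ (p + q - 1) + X 2 * g := by
      intro p q h1 h2 h3 h4
      rcases Nat.eq_zero_or_pos p with rfl | hp0
      · have : q = 1 := by simpa using h4
        subst this
        exact ⟨0, by rw [hP.base01]; norm_num⟩
      · obtain ⟨g, hg⟩ := (IH q h1 p hp0 h3 h4).1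
        exact ⟨Qw p q + X 2 * g, by rw [hg]; ring⟩
    have hSv : ∀ p q : ℕ, q < b → 1 ≤ q → p ≤ q → Nat.Coprime p q →
        ∃ g, P p q = X 0 ^ p * (X 0 + X 2) ^ (q - 1) + X 1 * g := by
      intro p q h1 h2 h3 h4
      rcases Nat.eq_zero_or_pos p with rfl | hp0
      · have : q = 1 := by simpa using h4
        subst this
        exact ⟨0, by rw [hP.base01]; norm_num⟩
      · obtain ⟨g, hg⟩ := (IH q h1 p hp0 h3 h4).2
        exact ⟨Qv p q + X 1 * g, by rw [hg]; ring⟩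
    constructor
    · -- w-part
      by_cases hspec : p1 = 0 ∧ q1 = 1
      · -- parent (0,1), a = 1
        obtain ⟨rfl, rfl⟩ := hspec
        obtain rfl : a = 1 := by
          rcases B12 rfl with ⟨_, h, _⟩ | ⟨h, _, _⟩
          · exact h
          · omega
        obtain rfl : p2 = 1 := by omega
        obtain ⟨n, rfl⟩ : ∃ n, q2 = n + 2 := ⟨q2 - 2, by omega⟩
        subst hq
        obtain ⟨g2, e2⟩ := (IH (n+2) hq2b 1 le_rfl (by omega) (Nat.coprime_one_left _)).1
        obtain ⟨g3, e3⟩ := hSw 1 (n+1) (by omega) (by omega) (by omega)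
          (Nat.coprime_one_left _)
        have hA2 := Qw_mul 1 (n+2) le_rfl (by omega)
        rw [show 1 + (n+2) - 1 = n + 2 by omega] at e2 hA2
        rw [show 1 + (n+2) - 2 = n + 1 by omega] at hA2
        rw [show 1 + (n+1) - 1 = n + 1 by omega] at e3
        rw [hrec, hP.base01, e2, show (1:ℕ) - 0 = 1 by omega, show n + 2 - 1 = n + 1 by omega, e3]
        refine ⟨Qw 1 (n+2) + (X 0 + X 1) * g2 + X 2 * g2 - X 1 * g3, ?_⟩
        have hT : Qw 1 (1 + (n+2)) = (((n:ℤ) + 2 : ℤ) : MvPolynomial (Fin 3) ℤ) * X 0 * (X 0 + X 1)^(n+1) := by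
          rw [Qw, show 1 + (1 + (n+2)) - 2 = n + 2 by omega,
            show 1 + (1 + (n+2)) - 3 = n + 1 by omega]
          push_cast; ring
        rw [show 1 + (1 + (n+2)) - 1 = n + 3 by omega, hT]
        push_cast at hA2 ⊢
        linear_combination (X 2 : MvPolynomial (Fin 3) ℤ) * hA2
      · -- general case
        have hp1 : 1 ≤ p1 := by
          rcases Nat.lt_or_ge q1 2 with h | h
          · have hq11 : q1 = 1 := by omega
            rcases B12 hq11 with ⟨h1, _, _⟩ | ⟨h1, _, _⟩
            · exact absurd ⟨h1, hq11⟩ hspec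
            · omega
          · exact (B13 h).1
        obtain ⟨g1, e1⟩ := (IH q1 hq1b p1 hp1 B4 C1).1
        obtain ⟨g2, e2⟩ := (IH q2 hq2b p2 B6 B5 C2).1
        obtain ⟨s, hs⟩ : ∃ s, p1 + q1 = s + 2 := ⟨p1 + q1 - 2, by omega⟩
        obtain ⟨t, ht⟩ : ∃ t, p2 + q2 = t + 3 := ⟨p2 + q2 - 3, by omega⟩
        have hA1 := Qw_mul p1 q1 hp1 B4
        have hA2 := Qw_mul p2 q2 B6 B5
        subst hp
        subst hq
        rw [show p1 + q1 - 1 = s + 1 by omega] at e1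
        rw [hs, show s + 2 - 1 = s + 1 by omega, show s + 2 - 2 = s by omega] at hA1
        rw [show p2 + q2 - 1 = t + 2 by omega] at e2
        rw [ht, show t + 3 - 1 = t + 2 by omega, show t + 3 - 2 = t + 1 by omega] at hA2
        rw [hrec, e1, e2, hs]
        refine ⟨Qw p1 q1 * (X 0 + X 1)^(t+2) + Qw p2 q2 * (X 0 + X 1)^(s+1)
          + (X 0 + X 1 + X 2) * (Qw p1 q1 * Qw p2 q2 + g1 * (X 0 + X 1)^(t+2)
            + g2 * (X 0 + X 1)^(s+1) + X 2 * (g1 * Qw p2 q2 + g2 * Qw p1 q1)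
            + X 2^2 * (g1 * g2))
          - X 0^p1 * X 1^q1 * X 2^s * P (p2 - p1) (q2 - q1), ?_⟩
        have hT : Qw (p1+p2) (q1+q2) = (((p1:ℤ) + p2 - 1 : ℤ) : MvPolynomial (Fin 3) ℤ) * (X 0 + X 1)^(s+t+3)
            + (((q1:ℤ) + q2 - p1 - p2 : ℤ) : MvPolynomial (Fin 3) ℤ) * X 0 * (X 0 + X 1)^(s+t+2) := by
          rw [Qw, show p1 + p2 + (q1 + q2) - 2 = s + t + 3 by omega,
            show p1 + p2 + (q1 + q2) - 3 = s + t + 2 by omega]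
          push_cast; ring
        rw [show p1 + p2 + (q1 + q2) - 1 = s + t + 4 by omega, hT]
        push_cast at hA1 hA2 ⊢
        linear_combination ((X 2 : MvPolynomial (Fin 3) ℤ) * (X 0 + X 1)^(t+2)) * hA1
          + ((X 2 : MvPolynomial (Fin 3) ℤ) * (X 0 + X 1)^(s+1)) * hA2
    · -- v-part
      by_cases hq11 : q1 = 1
      · subst hq11
        rcases B12 rfl with ⟨rfl, rfl, _⟩ | ⟨rfl, hb, _⟩
        · -- p1 = 0, a = 1
          obtain rfl : p2 = 1 := by omega
          obtain ⟨n, rfl⟩ : ∃ n, q2 = n + 2 := ⟨q2 - 2, by omega⟩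
          subst hq
          obtain ⟨g2, e2⟩ := (IH (n+2) hq2b 1 le_rfl (by omega) (Nat.coprime_one_left _)).2
          obtain ⟨g3, e3⟩ := hSv 1 (n+1) (by omega) (by omega) (by omega)
            (Nat.coprime_one_left _)
          have hA2 := Qv_mul 1 (n+2) le_rfl (by omega)
          rw [show n + 2 - 1 = n + 1 by omega] at e2 hA2
          rw [show n + 2 - 2 = n by omega] at hA2
          rw [show n + 1 - 1 = n by omega] at e3
          rw [hrec, hP.base01, e2, show (1:ℕ) - 0 = 1 by omega, show n + 2 - 1 = n + 1 by omega, e3]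
          refine ⟨Qv 1 (n+2) + (X 0 + X 2) * g2 + X 1 * g2 - X 2 * g3, ?_⟩
          have hT : Qv 1 (1 + (n+2)) = ((2:ℤ) : MvPolynomial (Fin 3) ℤ) * X 0 * (X 0 + X 2)^(n+1)
              + (((n:ℤ) + 1 : ℤ) : MvPolynomial (Fin 3) ℤ) * X 0^2 * (X 0 + X 2)^n := by
            rw [Qv, if_neg (by omega), if_neg (by omega),
              show 1 + (n+2) - 2 = n + 1 by omega, show 1 + (n+2) - 3 = n by omega]
            push_cast; ring
          rw [show 1 + (n+2) - 1 = n + 2 by omega, hT]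
          push_cast at hA2 ⊢
          linear_combination (X 1 : MvPolynomial (Fin 3) ℤ) * hA2
        · -- p1 = 1, b = a + 1
          obtain ⟨α, rfl⟩ : ∃ α, a = α + 2 := ⟨a - 2, by omega⟩
          obtain rfl : p2 = α + 1 := by omega
          obtain rfl : q2 = α + 2 := by omega
          subst hq
          obtain ⟨g2, e2⟩ := (IH (α+2) hq2b (α+1) (by omega) (by omega)
            (cop_succ (α+1))).2
          obtain ⟨g3, e3⟩ := hSv α (α+1) (by omega) (by omega) (by omega)
            (cop_succ α)
          have hA2 := Qv_mul (α+1) (α+2) (by omega) (by omega)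
          rw [show α + 2 - 1 = α + 1 by omega] at e2 hA2
          rw [show α + 2 - 2 = α by omega] at hA2
          rw [show α + 1 - 1 = α by omega] at e3
          rw [hrec, hP.base11, e2, show α + 1 - 1 = α by omega, show α + 2 - 1 = α + 1 by omega, e3]
          refine ⟨(X 0 + X 2) * (Qv (α+1) (α+2) + X 0 * g2 + X 1 * g2)
            + ((X 0^(α+1) * (X 0 + X 2)^(α+1)) + X 0 * Qv (α+1) (α+2))
            + X 1 * (Qv (α+1) (α+2) + X 0 * g2 + X 1 * g2)
            - X 0 * X 2^2 * g3, ?_⟩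
          have hT : Qv (α+2) (1 + (α+2)) = ((3*(α:ℤ) + 5 : ℤ) : MvPolynomial (Fin 3) ℤ) * X 0^(α+2) * (X 0 + X 2)^(α+1)
              + ((-(α:ℤ) - 1 : ℤ) : MvPolynomial (Fin 3) ℤ) * X 0^(α+3) * (X 0 + X 2)^α := by
            rw [Qv, if_neg (by omega), if_neg (by omega),
              show 1 + (α+2) - 2 = α + 1 by omega, show 1 + (α+2) - 3 = α by omega]
            push_cast; ring
          rw [show 1 + (α+2) - 1 = α + 2 by omega, hT]
          push_cast at hA2 ⊢
          linear_combination ((X 1 : MvPolynomial (Fin 3) ℤ) * X 0) * hA2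
      · -- q1 ≥ 2
        have hq12 : 2 ≤ q1 := by omega
        obtain ⟨hp1, hp1q1⟩ := B13 hq12
        have hp2q2 : p2 < q2 := by
          rcases Nat.lt_or_ge p2 q2 with h | h
          · exact h
          · exfalso
            have hev : p2 = q2 := le_antisymm B5 h
            subst hev
            have : p2 = 1 := by rw [← Nat.gcd_self p2]; exact C2
            omega
        obtain ⟨g1, e1⟩ := (IH q1 hq1b p1 hp1 B4 C1).2
        obtain ⟨g2, e2⟩ := (IH q2 hq2b p2 B6 B5 C2).2
        obtain ⟨s, rfl⟩ : ∃ s, q1 = s + 2 := ⟨q1 - 2, by omega⟩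
        obtain ⟨t, rfl⟩ : ∃ t, q2 = s + t + 3 := ⟨q2 - (s + 2) - 1, by omega⟩
        have hA1 := Qv_mul p1 (s+2) hp1 hp1q1
        have hA2 := Qv_mul p2 (s+t+3) B6 hp2q2
        subst hp
        subst hq
        rw [show s + 2 - 1 = s + 1 by omega] at e1 hA1
        rw [show s + 2 - 2 = s by omega] at hA1
        rw [show s + t + 3 - 1 = s + t + 2 by omega] at e2 hA2
        rw [show s + t + 3 - 2 = s + t + 1 by omega] at hA2
        rw [hrec, e1, e2]
        refine ⟨Qv p1 (s+2) * (X 0^p2 * (X 0 + X 2)^(s+t+2))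
          + Qv p2 (s+t+3) * (X 0^p1 * (X 0 + X 2)^(s+1))
          + (X 0 + X 1 + X 2) * (Qv p1 (s+2) * Qv p2 (s+t+3)
            + g1 * (X 0^p2 * (X 0 + X 2)^(s+t+2)) + g2 * (X 0^p1 * (X 0 + X 2)^(s+1))
            + X 1 * (g1 * Qv p2 (s+t+3) + g2 * Qv p1 (s+2)) + X 1^2 * (g1 * g2))
          - X 0^p1 * X 1^s * X 2^(p1 + (s+2)) * P (p2 - p1) (s + t + 3 - (s+2)), ?_⟩
        have hT : Qv (p1+p2) (s + 2 + (s + t + 3)) = ((3*((p1:ℤ) + p2) - 1 : ℤ) : MvPolynomial (Fin 3) ℤ) * X 0^(p1+p2) * (X 0 + X 2)^(2*s+t+3)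
            + ((2*(s:ℤ) + t + 5 - 2*((p1:ℤ) + p2) : ℤ) : MvPolynomial (Fin 3) ℤ) * X 0^(p1+p2+1) * (X 0 + X 2)^(2*s+t+2) := by
          rw [Qv, if_neg (by omega), if_neg (by omega),
            show s + 2 + (s + t + 3) - 2 = 2*s + t + 3 by omega,
            show s + 2 + (s + t + 3) - 3 = 2*s + t + 2 by omega]
          push_cast; ring
        rw [show s + 2 + (s + t + 3) - 1 = 2*s + t + 4 by omega, hT]
        push_cast at hA1 hA2 ⊢
        linear_combination ((X 1 : MvPolynomial (Fin 3) ℤ) * (X 0^p2 * (X 0 + X 2)^(s+t+2))) * hA1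
          + ((X 1 : MvPolynomial (Fin 3) ℤ) * (X 0^p1 * (X 0 + X 2)^(s+1))) * hA2

lemma fs_eq01 (x y i j k : ℕ) : (single 0 x + single 1 y : Fin 3 →₀ ℕ) = single 0 i + single 1 j + single 2 k ↔ (x = i ∧ y = j ∧ k = 0) := by
  constructor
  · intro h
    have h0 := DFunLike.congr_fun h (0 : Fin 3)
    have h1 := DFunLike.congr_fun h (1 : Fin 3)
    have h2 := DFunLike.congr_fun h (2 : Fin 3)
    simp [Finsupp.single_apply] at h0 h1 h2
    exact ⟨h0, h1, h2.symm⟩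
  · rintro ⟨rfl, rfl, rfl⟩; ext r; fin_cases r <;> simp [Finsupp.single_apply]

lemma coeff_uv (i j k A n : ℕ) :
    coeff (single 0 i + single 1 j + single 2 k) ((X 0) ^ A * (X 0 + X 1) ^ n : MvPolynomial (Fin 3) ℤ)
    = if k = 0 ∧ A ≤ i ∧ i + j = A + n then (n.choose (i - A) : ℤ) else 0 := by
  rw [add_pow, Finset.mul_sum]
  have hterm : ∀ c, (X 0) ^ A * ((X 0 : MvPolynomial (Fin 3) ℤ) ^ c * X 1 ^ (n - c) * (n.choose c : MvPolynomial (Fin 3) ℤ))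
      = monomial (single 0 (A + c) + single 1 (n - c)) ((n.choose c : ℤ)) := by
    intro c
    have h1 : (X 0:MvPolynomial (Fin 3) ℤ)^A * (X 0^c * X 1^(n-c) * (n.choose c : MvPolynomial (Fin 3) ℤ))
        = (X 0^(A+c) * X 1^(n-c)) * C ((n.choose c:ℤ)) := by
      rw [map_natCast]; ring
    rw [h1, X_pow_eq_monomial, X_pow_eq_monomial, monomial_mul, one_mul, C_apply, monomial_mul, add_zero, one_mul]
  simp only [hterm, coeff_sum, coeff_monomial]
  by_cases H : k = 0 ∧ A ≤ i ∧ i + j = A + n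
  · obtain ⟨hk, hAi, hij⟩ := H
    rw [Finset.sum_eq_single (i - A), if_pos ((fs_eq01 _ _ _ _ _).mpr ⟨by omega, by omega, by omega⟩),
      if_pos ⟨hk, hAi, hij⟩]
    · intro c _ hc
      rw [if_neg]
      rw [fs_eq01]; omega
    · intro h
      exfalso; apply h; simp only [Finset.mem_range]; omega
  · rw [if_neg H, Finset.sum_eq_zero]
    intro c hc
    simp only [Finset.mem_range] at hc
    rw [if_neg]
    rw [fs_eq01]; omega

lemma msub1 (i j k : ℕ) : (single 0 i + single 1 j + single 2 k : Fin 3 →₀ ℕ) - single 1 1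
    = single 0 i + single 1 (j - 1) + single 2 k := by
  ext r; fin_cases r <;> simp [Finsupp.single_apply, Finsupp.tsub_apply]

lemma msub2 (i j k : ℕ) : (single 0 i + single 1 j + single 2 k : Fin 3 →₀ ℕ) - single 2 1
    = single 0 i + single 1 j + single 2 (k - 1) := by
  ext r; fin_cases r <;> simp [Finsupp.single_apply, Finsupp.tsub_apply]

lemma mapp (i j k : ℕ) : ((single 0 i + single 1 j + single 2 k : Fin 3 →₀ ℕ)) 1 = j ∧
    ((single 0 i + single 1 j + single 2 k : Fin 3 →₀ ℕ)) 2 = k := by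
  constructor <;> simp [Finsupp.single_apply]

lemma extract_R1 (P : ℕ → ℕ → MvPolynomial (Fin 3) ℤ) (hP : MarkovNumerator P)
    (a b : ℕ) (ha : 1 ≤ a) (hab : a < b) (hb3 : 3 ≤ b) (hco : Nat.Coprime a b) (i : ℕ) :
    markovCoeff P a b i 1 =
      (3 * (a : ℤ) - 1) * zchoose ((b : ℤ) - 2) ((i : ℤ) - a)
        + ((b : ℤ) - 2 * a) * zchoose ((b : ℤ) - 3) ((i : ℤ) - a - 1) := by
  obtain ⟨g, hg⟩ := (markov_main P hP b a ha (le_of_lt hab) hco).2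
  rw [markovCoeff, hg, coeff_add, coeff_add]
  rw [coeff_uw i 1 (a + b - 1 - i - 1) a (b-1), if_neg (by omega)]
  have hX1 : (X 1 : MvPolynomial (Fin 3) ℤ) = monomial (single 1 1) 1 := by
    rw [← X_pow_eq_monomial, pow_one]
  rw [show (X 1 : MvPolynomial (Fin 3) ℤ)^2 = monomial (single 1 2) 1 from X_pow_eq_monomial,
    coeff_monomial_mul' (r := (1:ℤ)), if_neg (by
      rw [Finsupp.single_le_iff, (mapp i 1 (a + b - 1 - i - 1)).1]; omega)]
  rw [hX1, coeff_monomial_mul' (r := (1:ℤ)), if_pos (by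
      rw [Finsupp.single_le_iff, (mapp i 1 (a + b - 1 - i - 1)).1]), one_mul]
  rw [msub1, show (1:ℕ) - 1 = 0 by omega]
  rw [Qv, if_neg (by omega), if_neg (by omega), coeff_add]
  simp only [← eq_intCast (C : ℤ →+* MvPolynomial (Fin 3) ℤ)]
  rw [mul_assoc, coeff_C_mul, mul_assoc, coeff_C_mul]
  rw [coeff_uw i 0 (a + b - 1 - i - 1) a (b-2), coeff_uw i 0 (a + b - 1 - i - 1) (a+1) (b-3)]
  have hA : (if 0 = 0 ∧ a ≤ i ∧ i + (a + b - 1 - i - 1) = a + (b-2) then ((b-2).choose (i - a) : ℤ) else 0)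
      = zchoose ((b : ℤ) - 2) ((i : ℤ) - a) := by
    rw [zchoose]
    by_cases h : a ≤ i ∧ i ≤ a + b - 2
    · rw [if_pos (by omega), if_pos (by constructor <;> omega)]
      rw [show ((b:ℤ)-2).toNat = b - 2 by omega, show ((i:ℤ)-a).toNat = i - a by omega]
    · rw [if_neg (by omega), if_neg (by omega)]
  have hB : (if 0 = 0 ∧ a + 1 ≤ i ∧ i + (a + b - 1 - i - 1) = (a+1) + (b-3) then ((b-3).choose (i - (a+1)) : ℤ) else 0)
      = zchoose ((b : ℤ) - 3) ((i : ℤ) - a - 1) := by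
    rw [zchoose]
    by_cases h : a + 1 ≤ i ∧ i ≤ a + b - 2
    · rw [if_pos (by omega), if_pos (by constructor <;> omega)]
      rw [show ((b:ℤ)-3).toNat = b - 3 by omega, show ((i:ℤ)-a-1).toNat = i - (a+1) by omega]
    · rw [if_neg (by omega), if_neg (by omega)]
  rw [hA, hB]
  ring

lemma extract_T1 (P : ℕ → ℕ → MvPolynomial (Fin 3) ℤ) (hP : MarkovNumerator P)
    (a b : ℕ) (ha : 1 ≤ a) (hab : a ≤ b) (hab3 : 3 ≤ a + b) (hco : Nat.Coprime a b)
    (i j : ℕ) (hij : i + j = a + b - 2) :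
    markovCoeff P a b i j =
      ((a : ℤ) - 1) * zchoose ((a : ℤ) + b - 2) (i : ℤ)
        + ((b : ℤ) - a) * zchoose ((a : ℤ) + b - 3) ((i : ℤ) - 1) := by
  obtain ⟨g, hg⟩ := (markov_main P hP b a ha hab hco).1
  rw [markovCoeff, hg, show a + b - 1 - i - j = 1 by omega, coeff_add, coeff_add]
  rw [show ((X 0 + X 1 : MvPolynomial (Fin 3) ℤ))^(a+b-1) = X 0^0 * (X 0 + X 1)^(a+b-1) by ring]
  rw [coeff_uv i j 1 0 (a+b-1), if_neg (by omega)]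
  have hX2 : (X 2 : MvPolynomial (Fin 3) ℤ) = monomial (single 2 1) 1 := by
    rw [← X_pow_eq_monomial, pow_one]
  rw [show (X 2 : MvPolynomial (Fin 3) ℤ)^2 = monomial (single 2 2) 1 from X_pow_eq_monomial,
    coeff_monomial_mul' (r := (1:ℤ)), if_neg (by
      rw [Finsupp.single_le_iff, (mapp i j 1).2]; omega)]
  rw [hX2, coeff_monomial_mul' (r := (1:ℤ)), if_pos (by
      rw [Finsupp.single_le_iff, (mapp i j 1).2]), one_mul]
  rw [msub2, show (1:ℕ) - 1 = 0 by omega]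
  rw [Qw, coeff_add]
  simp only [← eq_intCast (C : ℤ →+* MvPolynomial (Fin 3) ℤ)]
  rw [show (C ((a:ℤ) - 1) : MvPolynomial (Fin 3) ℤ) * (X 0 + X 1)^(a+b-2)
      = C ((a:ℤ) - 1) * (X 0^0 * (X 0 + X 1)^(a+b-2)) by ring]
  rw [coeff_C_mul, mul_assoc, coeff_C_mul]
  rw [show (X 0 : MvPolynomial (Fin 3) ℤ) * (X 0 + X 1)^(a+b-3) = X 0^1 * (X 0 + X 1)^(a+b-3) by ring]
  rw [coeff_uv i j 0 0 (a+b-2), coeff_uv i j 0 1 (a+b-3)]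
  have hA : (if 0 = 0 ∧ 0 ≤ i ∧ i + j = 0 + (a+b-2) then ((a+b-2).choose (i - 0) : ℤ) else 0)
      = zchoose ((a : ℤ) + b - 2) (i : ℤ) := by
    rw [zchoose, if_pos (by omega), if_pos (by constructor <;> omega)]
    rw [show ((a:ℤ)+b-2).toNat = a + b - 2 by omega, show ((i:ℤ)).toNat = i - 0 by omega]
  have hB : (if 0 = 0 ∧ 1 ≤ i ∧ i + j = 1 + (a+b-3) then ((a+b-3).choose (i - 1) : ℤ) else 0)
      = zchoose ((a : ℤ) + b - 3) ((i : ℤ) - 1) := by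
    rw [zchoose]
    by_cases h : 1 ≤ i
    · rw [if_pos (by omega), if_pos (by constructor <;> omega)]
      rw [show ((a:ℤ)+b-3).toNat = a + b - 3 by omega, show ((i:ℤ)-1).toNat = i - 1 by omega]
    · rw [if_neg (by omega), if_neg (by omega)]
  rw [hA, hB]
  ring

end MarkovAux

/-- Coefficients of `P_{a/b}` on the line `j = 1` and on the second diagonal
`i + j = a+b-2`: `A_{i,1} = (3a-1)·C(b-2, i-a) + (b-2a)·C(b-3, i-a-1)` and, for
`i + j = a+b-2`, `A_{i,j} = (a-1)·C(a+b-2, i) + (b-a)·C(a+b-3, i-1)`. -/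
theorem markov_numerator_T1_R1 (P : ℕ → ℕ → MvPolynomial (Fin 3) ℤ)
    (hP : MarkovNumerator P) :
    (∀ a b : ℕ, 1 ≤ a → a < b → 3 ≤ b → Nat.Coprime a b → ∀ i : ℕ,
      markovCoeff P a b i 1 =
        (3 * (a : ℤ) - 1) * zchoose ((b : ℤ) - 2) ((i : ℤ) - a)
          + ((b : ℤ) - 2 * a) * zchoose ((b : ℤ) - 3) ((i : ℤ) - a - 1)) ∧
    (∀ a b : ℕ, 1 ≤ a → a ≤ b → 3 ≤ a + b → Nat.Coprime a b → ∀ i j : ℕ,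
      i + j = a + b - 2 →
      markovCoeff P a b i j =
        ((a : ℤ) - 1) * zchoose ((a : ℤ) + b - 2) (i : ℤ)
          + ((b : ℤ) - a) * zchoose ((a : ℤ) + b - 3) ((i : ℤ) - 1)) := by
  constructor
  · intro a b ha hab hb3 hco i
    exact extract_R1 P hP a b ha hab hb3 hco i
  · intro a b ha hab hab3 hco i j hij
    exact extract_T1 P hP a b ha hab hab3 hco i j hij
end

section
/- For every n ≥ 2, the coefficient of u^1 (the degree-1 part in u) of the polynomial (u+v+w)·Q_{n−1}·Q_n − u·v^{n−1}·w^{n} (which is the Markov numerator P_{2/(2n−1)} of the Markov polynomial M_{2/(2n−1)}) equals 2n·v^{2n−1} + Σ_{k=1}^{n−1} 4k·v^{n+k−1}·w^{n−k}. -/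
open MvPolynomial

/-- The Markov–Fibonacci numerator polynomials `Q n ∈ ℤ[u,v,w]` (with `u = X 0`,
`v = X 1`, `w = X 2`), defined by `Q 0 = 1`, `Q 1 = u + v` and
`Q (n+2) = (u+v+w)·Q (n+1) - v·w·Q n`. `Q n` is the numerator of the Markov
polynomial `M_{1/n}`. -/
noncomputable def Q : ℕ → MvPolynomial (Fin 3) ℤ
  | 0 => 1
  | 1 => X 0 + X 1
  | (n + 2) => (X 0 + X 1 + X 2) * Q (n + 1) - X 1 * X 2 * Q n


noncomputable def idx (a b c : ℕ) : Fin 3 →₀ ℕ :=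
  Finsupp.single 0 a + Finsupp.single 1 b + Finsupp.single 2 c

lemma idx_apply_zero (a b c : ℕ) : idx a b c 0 = a := by
  simp [idx, Finsupp.single_apply]

lemma idx_apply_one (a b c : ℕ) : idx a b c 1 = b := by
  simp [idx, Finsupp.single_apply]

lemma idx_apply_two (a b c : ℕ) : idx a b c 2 = c := by
  simp [idx, Finsupp.single_apply]

lemma idx_eq_iff {a b c a' b' c' : ℕ} :
    idx a b c = idx a' b' c' ↔ a = a' ∧ b = b' ∧ c = c' := by
  constructor
  · intro h
    exact ⟨by rw [← idx_apply_zero a b c, h, idx_apply_zero],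
      by rw [← idx_apply_one a b c, h, idx_apply_one],
      by rw [← idx_apply_two a b c, h, idx_apply_two]⟩
  · rintro ⟨rfl, rfl, rfl⟩; rfl

lemma idx_le_iff {a b c a' b' c' : ℕ} :
    idx a' b' c' ≤ idx a b c ↔ a' ≤ a ∧ b' ≤ b ∧ c' ≤ c := by
  rw [Finsupp.le_def]
  constructor
  · intro h
    exact ⟨by simpa [idx_apply_zero] using h 0,
      by simpa [idx_apply_one] using h 1,
      by simpa [idx_apply_two] using h 2⟩
  · rintro ⟨h1, h2, h3⟩ i
    fin_cases i <;>
      simp_all [idx_apply_zero, idx_apply_one, idx_apply_two]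

lemma idx_sub (a b c a' b' c' : ℕ) :
    idx a b c - idx a' b' c' = idx (a - a') (b - b') (c - c') := by
  ext i
  rw [Finsupp.tsub_apply]
  fin_cases i <;>
    simp [idx_apply_zero, idx_apply_one, idx_apply_two]

lemma idx_zero : idx 0 0 0 = 0 := by simp [idx]

lemma mono_eq (a b c : ℕ) :
    (X 0 ^ a * X 1 ^ b * X 2 ^ c : MvPolynomial (Fin 3) ℤ) = monomial (idx a b c) 1 := by
  simp [idx, X_pow_eq_monomial, monomial_mul]

lemma coeff_mmul (a b c a' b' c' : ℕ) (p : MvPolynomial (Fin 3) ℤ) :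
    coeff (idx a b c) (monomial (idx a' b' c') 1 * p)
      = if a' ≤ a ∧ b' ≤ b ∧ c' ≤ c then coeff (idx (a - a') (b - b') (c - c')) p else 0 := by
  rw [coeff_monomial_mul']
  simp only [idx_le_iff, idx_sub, one_mul]

lemma coeff_mono (a b c a' b' c' : ℕ) :
    coeff (idx a b c) (monomial (idx a' b' c') (1 : ℤ))
      = if a' = a ∧ b' = b ∧ c' = c then 1 else 0 := by
  rw [coeff_monomial]
  simp [idx_eq_iff]


noncomputable def Rp : ℕ → MvPolynomial (Fin 3) ℤ
  | 0 => 0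
  | 1 => 1
  | (n + 2) => X 1 ^ (n + 1) + (X 1 + X 2) * Rp (n + 1) - X 1 * X 2 * Rp n

noncomputable def Sp : ℕ → MvPolynomial (Fin 3) ℤ
  | 0 => 0
  | 1 => 0
  | (n + 2) => Rp (n + 1) + (X 0 + X 1 + X 2) * Sp (n + 1) - X 1 * X 2 * Sp n

lemma Qdec : ∀ n, Q n = X 1 ^ n + X 0 * Rp n + X 0 ^ 2 * Sp n := by
  have key : ∀ n, (Q n = X 1 ^ n + X 0 * Rp n + X 0 ^ 2 * Sp n) ∧
      (Q (n + 1) = X 1 ^ (n + 1) + X 0 * Rp (n + 1) + X 0 ^ 2 * Sp (n + 1)) := by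
    intro n
    induction n with
    | zero =>
      constructor
      · simp only [Q, Rp, Sp]; ring
      · simp only [Q, Rp, Sp]; ring
    | succ k ih =>
      refine ⟨ih.2, ?_⟩
      have hQ : Q (k + 2) = (X 0 + X 1 + X 2) * Q (k + 1) - X 1 * X 2 * Q k := rfl
      have hR : Rp (k + 2) = X 1 ^ (k + 1) + (X 1 + X 2) * Rp (k + 1) - X 1 * X 2 * Rp k := rfl
      have hS : Sp (k + 2) = Rp (k + 1) + (X 0 + X 1 + X 2) * Sp (k + 1) - X 1 * X 2 * Sp k := rfl
      show Q (k + 2) = X 1 ^ (k + 2) + X 0 * Rp (k + 2) + X 0 ^ 2 * Sp (k + 2)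
      rw [hQ, hR, hS, ih.1, ih.2]
      ring
  exact fun n => (key n).1

lemma hm1 (k : ℕ) : (X 1 ^ k : MvPolynomial (Fin 3) ℤ) = monomial (idx 0 k 0) 1 := by
  rw [← mono_eq]; ring

lemma hm12 (k l : ℕ) : (X 1 ^ k * X 2 ^ l : MvPolynomial (Fin 3) ℤ)
    = monomial (idx 0 k l) 1 := by
  rw [← mono_eq]; ring

lemma hmX1 : (X 1 : MvPolynomial (Fin 3) ℤ) = monomial (idx 0 1 0) 1 := by
  rw [← mono_eq]; ring

lemma hmX2 : (X 2 : MvPolynomial (Fin 3) ℤ) = monomial (idx 0 0 1) 1 := by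
  rw [← mono_eq]; ring

lemma hmX1X2 : (X 1 * X 2 : MvPolynomial (Fin 3) ℤ) = monomial (idx 0 1 1) 1 := by
  rw [← mono_eq]; ring

lemma Rp_coeff : ∀ n b c, coeff (idx 0 b c) (Rp n)
    = if b + c + 1 = n then (b : ℤ) + 1 else 0 := by
  have key : ∀ n, (∀ b c, coeff (idx 0 b c) (Rp n)
        = if b + c + 1 = n then (b : ℤ) + 1 else 0) ∧
      (∀ b c, coeff (idx 0 b c) (Rp (n + 1))
        = if b + c + 1 = n + 1 then (b : ℤ) + 1 else 0) := by
    intro n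
    induction n with
    | zero =>
      constructor
      · intro b c; simp [Rp]
      · intro b c
        show coeff (idx 0 b c) (1 : MvPolynomial (Fin 3) ℤ) = _
        rw [coeff_one, ← idx_zero]
        rcases eq_or_ne (idx 0 0 0) (idx 0 b c) with h | h
        · rw [if_pos h]
          obtain ⟨-, rfl, rfl⟩ := idx_eq_iff.mp h
          norm_num
        · rw [if_neg h]
          rw [Ne, idx_eq_iff] at h
          have : ¬ (b + c + 1 = 0 + 1) := by omega
          rw [if_neg this]
    | succ k ih =>
      refine ⟨ih.2, ?_⟩
      intro b c
      have hR : Rp (k + 2) = X 1 ^ (k + 1) + (X 1 + X 2) * Rp (k + 1) - X 1 * X 2 * Rp k := rfl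
      rw [hR, add_mul, coeff_sub, coeff_add, coeff_add, hm1, coeff_mono,
        hmX1X2, hmX1, hmX2, coeff_mmul, coeff_mmul, coeff_mmul,
        ih.1]
      simp only [ih.1, ih.2, Nat.sub_zero]
      norm_num
      split_ifs <;> push_cast <;> omega
  exact fun n => (key n).1


set_option maxHeartbeats 2000000 in
/-- The degree-1 part in `u` of `(u+v+w)·Q_{n-1}·Q_n - u·v^(n-1)·w^n` (the Markov
numerator `P_{2/(2n-1)}`) equals `2n·v^(2n-1) + Σ_{k=1}^{n-1} 4k·v^(n+k-1)·w^(n-k)`: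
the coefficient of `u·v^j·w^m` is `2n` if `(j,m) = (2n-1,0)`, is `4(n-m) = 4k` if
`j + m = 2n-1` with `1 ≤ m ≤ n-1` (so `j = n+k-1`, `m = n-k`), and `0` otherwise. -/
theorem pell_like_numerator_u1 (n : ℕ) (hn : 2 ≤ n) (j m : ℕ) :
    MvPolynomial.coeff (Finsupp.single 0 1 + Finsupp.single 1 j + Finsupp.single 2 m)
        ((X 0 + X 1 + X 2) * Q (n - 1) * Q n - X 0 * X 1 ^ (n - 1) * X 2 ^ n)
      = if j + m = 2 * n - 1 ∧ m ≤ n - 1 then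
          (if m = 0 then (2 * n : ℤ) else 4 * ((n : ℤ) - m))
        else 0 := by
  obtain ⟨k, rfl⟩ : ∃ k, n = k + 2 := ⟨n - 2, by omega⟩
  rw [show k + 2 - 1 = k + 1 from rfl]
  have h0 : (Finsupp.single (0 : Fin 3) 1 + Finsupp.single 1 j + Finsupp.single 2 m)
      = Finsupp.single (0 : Fin 3) 1 + idx 0 j m := by
    simp [idx, add_assoc]
  have hP : (X 0 + X 1 + X 2) * Q (k + 1) * Q (k + 2) - X 0 * X 1 ^ (k + 1) * X 2 ^ (k + 2)
      = ((X 1 : MvPolynomial (Fin 3) ℤ) ^ (2 * k + 4) + X 1 ^ (2 * k + 3) * X 2 ^ 1)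
        + X 0 * (X 1 ^ (2 * k + 3)
            + X 1 ^ (k + 2) * Rp (k + 2)
            + X 1 ^ (k + 1) * X 2 ^ 1 * Rp (k + 2)
            + X 1 ^ (k + 3) * Rp (k + 1)
            + X 1 ^ (k + 2) * X 2 ^ 1 * Rp (k + 1)
            - X 1 ^ (k + 1) * X 2 ^ (k + 2))
        + X 0 * (X 0 *
          ((X 1 ^ (k + 1) * Rp (k + 2) + X 1 ^ (k + 2) * Rp (k + 1))
            + (X 1 + X 2) * (X 1 ^ (k + 1) * Sp (k + 2) + Rp (k + 1) * Rp (k + 2)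
                + X 1 ^ (k + 2) * Sp (k + 1))
            + X 0 * ((X 1 ^ (k + 1) * Sp (k + 2) + Rp (k + 1) * Rp (k + 2)
                  + X 1 ^ (k + 2) * Sp (k + 1))
                + (X 1 + X 2) * (Rp (k + 1) * Sp (k + 2) + Rp (k + 2) * Sp (k + 1)))
            + X 0 ^ 2 * ((Rp (k + 1) * Sp (k + 2) + Rp (k + 2) * Sp (k + 1))
                + (X 1 + X 2) * (Sp (k + 1) * Sp (k + 2)))
            + X 0 ^ 3 * (Sp (k + 1) * Sp (k + 2)))) := by
    rw [Qdec (k + 1), Qdec (k + 2)]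
    ring
  rw [h0, hP, coeff_add, coeff_add, coeff_add, coeff_X_mul, coeff_X_mul, coeff_X_mul',
    if_neg (by simp [Finsupp.mem_support_iff, idx_apply_zero])]
  rw [show ((X 1 : MvPolynomial (Fin 3) ℤ) ^ (2 * k + 4)) = X 0 ^ 0 * X 1 ^ (2*k+4) * X 2 ^ 0 from by ring,
    show ((X 1 : MvPolynomial (Fin 3) ℤ) ^ (2 * k + 3) * X 2 ^ 1) = X 0 ^ 0 * X 1 ^ (2*k+3) * X 2 ^ 1 from by ring,
    mono_eq, mono_eq]
  rw [show (Finsupp.single (0:Fin 3) 1 + idx 0 j m) = idx 1 j m from (h0).symm]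
  rw [coeff_sub, coeff_add, coeff_add, coeff_add, coeff_add]
  rw [hm12 (k+1) 1, hm12 (k+2) 1, hm12 (k+1) (k+2), hm1 (2*k+3), hm1 (k+2), hm1 (k+3)]
  rw [coeff_mono, coeff_mono, coeff_mono, coeff_mono, coeff_mmul, coeff_mmul, coeff_mmul, coeff_mmul]
  simp only [Nat.sub_zero, Rp_coeff]
  norm_num
  split_ifs <;> push_cast <;> omega
end
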